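/- Let A₀ be a Noetherian ring, m₀ ⊂ A₀ an ideal, E₀ a finitely generated A₀-module, F₀ ⊆ E₀ a submodule. Let A = A₀[z], m = m₀A + (z), E = E₀[z], F = F₀[z]. Then the Artin–Rees index of F ⊆ E with respect to m equals the Artin–Rees index of F₀ ⊆ E₀ with respect to m₀. -/

import Mathlib

open Polynomial

/-
Both Artin–Rees conditions hold for exactly the same `c`, so the two infima agree.
Coefficientwise, `mⁿE ∩ F` consists of the `∑ X^d e_d` with `e_d ∈ m₀^{n-d}E₀ ∩ F₀`.
Constant polynomials reduce the condition over `A₀[X]` to the one over `A₀` (read off the constant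
coefficient). Conversely, a term `X^d e_d` with `d ≥ n - c` absorbs `X^{n-c}` directly, and one
with `d < n - c` uses the condition over `A₀` in degree `n - d > c`.
-/

/-- The Artin–Rees index of a submodule `F ⊆ E` with respect to an ideal `m`: the smallest
`c` such that `mⁿE ∩ F = m^{n-c}(m^cE ∩ F)` for all `n > c`. -/
noncomputable def arIndex {A E : Type*} [CommRing A] [AddCommGroup E] [Module A E]
    (m : Ideal A) (F : Submodule A E) : ℕ :=
  sInf {c : ℕ | ∀ n : ℕ, n > c →
    (m ^ n • ⊤ : Submodule A E) ⊓ F = m ^ (n - c) • ((m ^ c • ⊤) ⊓ F)}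

section ArtinReesBound

variable {A E : Type*} [CommRing A] [AddCommGroup E] [Module A E]

def IsArtinReesBound (m : Ideal A) (F : Submodule A E) (c : ℕ) : Prop :=
  ∀ n : ℕ, n > c → (m ^ n • ⊤ : Submodule A E) ⊓ F = m ^ (n - c) • ((m ^ c • ⊤) ⊓ F)

theorem arIndex_eq_sInf (m : Ideal A) (F : Submodule A E) :
    arIndex m F = sInf {c | IsArtinReesBound m F c} :=
  rfl

theorem pow_sub_smul_inf_le (m : Ideal A) (F : Submodule A E) {c n : ℕ} (h : c ≤ n) :
    m ^ (n - c) • ((m ^ c • ⊤ : Submodule A E) ⊓ F) ≤ (m ^ n • ⊤) ⊓ F := by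
  refine le_inf ?_ ?_
  · refine (Submodule.smul_mono le_rfl inf_le_left).trans ?_
    rw [← Submodule.smul_assoc, Ideal.smul_eq_mul, ← pow_add, Nat.sub_add_cancel h]
  · exact (Submodule.smul_mono le_rfl inf_le_right).trans Submodule.smul_le_right

theorem isArtinReesBound_iff (m : Ideal A) (F : Submodule A E) (c : ℕ) :
    IsArtinReesBound m F c ↔
      ∀ n : ℕ, n > c → (m ^ n • ⊤ : Submodule A E) ⊓ F ≤ m ^ (n - c) • ((m ^ c • ⊤) ⊓ F) :=
  forall₂_congr fun _ hn => ⟨le_of_eq, fun h => h.antisymm (pow_sub_smul_inf_le m F hn.le)⟩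

end ArtinReesBound

namespace PolynomialModule

variable {R M : Type*} [CommRing R] [AddCommGroup M] [Module R M]

theorem eq_sum_single (p : PolynomialModule R M) :
    p = p.coeff.support.sum fun d => single R d (p.coeff d) :=
  coeff_injective <| by
    rw [coeff_sum]
    exact (Finsupp.sum_single _).symm

theorem single_zero_smul (a : R) (e : M) : single R 0 (a • e) = (C a : R[X]) • single R 0 e := by
  rw [single_smul, ← algebraMap_smul R[X] a, Polynomial.algebraMap_eq]

theorem single_eq_X_pow_smul (d : ℕ) (e : M) :
    single R d e = (X ^ d : R[X]) • single R 0 e := by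
  rw [X_pow_eq_monomial, monomial_smul_single, add_zero, one_smul]

end PolynomialModule

namespace ArtinRees

variable {A₀ : Type*} [CommRing A₀] (m₀ : Ideal A₀)
variable {E₀ : Type*} [AddCommGroup E₀] [Module A₀ E₀] (F₀ : Submodule A₀ E₀)

noncomputable def polyIdeal : Ideal A₀[X] :=
  m₀.map (C : A₀ →+* A₀[X]) ⊔ Ideal.span {(X : A₀[X])}

/-- `F₀[X]`, as a submodule of `E₀[X]`. -/
noncomputable def polySubmodule : Submodule A₀[X] (PolynomialModule A₀ E₀) :=
  Submodule.span A₀[X] ((PolynomialModule.single A₀ 0 : E₀ → PolynomialModule A₀ E₀) '' F₀)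

local notation "𝔪" => polyIdeal m₀
local notation "𝔉" => polySubmodule F₀
local notation "⊤ₓ" => (⊤ : Submodule A₀[X] (PolynomialModule A₀ E₀))

theorem X_mem_polyIdeal : (X : A₀[X]) ∈ 𝔪 :=
  Ideal.mem_sup_right (Ideal.mem_span_singleton_self X)

theorem C_mem_polyIdeal_pow {k : ℕ} {a : A₀} (ha : a ∈ m₀ ^ k) : C a ∈ 𝔪 ^ k := by
  have h : C a ∈ m₀.map (C : A₀ →+* A₀[X]) ^ k := by
    rw [← Ideal.map_pow]
    exact Ideal.mem_map_of_mem _ ha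
  exact Ideal.pow_right_mono le_sup_left k h

theorem X_pow_smul_mem_pow_smul {N : Submodule A₀[X] (PolynomialModule A₀ E₀)} {b : ℕ}
    {p : PolynomialModule A₀ E₀} (hp : p ∈ 𝔪 ^ b • N) (a : ℕ) :
    (X ^ a : A₀[X]) • p ∈ 𝔪 ^ (a + b) • N := by
  rw [pow_add, ← Ideal.smul_eq_mul, Submodule.smul_assoc]
  exact Submodule.smul_mem_smul (Ideal.pow_mem_pow (X_mem_polyIdeal m₀) a) hp

theorem coeff_mul_mem_pow {p q : ℕ} {a b : A₀[X]} (ha : ∀ i, a.coeff i ∈ m₀ ^ (p - i))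
    (hb : ∀ i, b.coeff i ∈ m₀ ^ (q - i)) (j : ℕ) : (a * b).coeff j ∈ m₀ ^ (p + q - j) := by
  rw [coeff_mul]
  refine Submodule.sum_mem _ fun ⟨s, t⟩ hst => ?_
  have hst : s + t = j := Finset.HasAntidiagonal.mem_antidiagonal.mp hst
  have h := Ideal.mul_mem_mul (ha s) (hb t)
  rw [← pow_add] at h
  exact Ideal.pow_le_pow_right (by omega) h

theorem polyIdeal_le_comap_constantCoeff : 𝔪 ≤ m₀.comap constantCoeff :=
  sup_le (Ideal.map_le_iff_le_comap.mpr fun a ha => by simpa using ha)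
    (Ideal.span_le.mpr (by simp))

theorem coeff_mem_of_mem_polyIdeal_pow {n : ℕ} {q : A₀[X]} (hq : q ∈ 𝔪 ^ n) (j : ℕ) :
    q.coeff j ∈ m₀ ^ (n - j) := by
  induction n generalizing q j with
  | zero => simp
  | succ n ih =>
    rw [pow_succ] at hq
    induction hq using Submodule.mul_induction_on' generalizing j with
    | mem_mul_mem a ha b hb =>
      refine coeff_mul_mem_pow m₀ (ih ha) (fun i => ?_) j
      rcases i with _ | i
      · simpa using polyIdeal_le_comap_constantCoeff m₀ hb
      · simp
    | add x _ y _ hx hy => exact Polynomial.coeff_add x y j ▸ add_mem (hx j) (hy j)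

theorem coeff_mem_of_mem_pow_smul_top {n : ℕ} {p : PolynomialModule A₀ E₀}
    (hp : p ∈ 𝔪 ^ n • ⊤ₓ) (d : ℕ) : p.coeff d ∈ (m₀ ^ (n - d) • ⊤ : Submodule A₀ E₀) := by
  induction hp using Submodule.smul_induction_on' generalizing d with
  | smul q hq x _ =>
    rw [PolynomialModule.smul_apply]
    refine Submodule.sum_mem _ fun ⟨i, j⟩ hij => ?_
    have hij : i + j = d := Finset.HasAntidiagonal.mem_antidiagonal.mp hij
    exact Submodule.smul_mem_smul
      (Ideal.pow_le_pow_right (by omega) (coeff_mem_of_mem_polyIdeal_pow m₀ hq i))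
      Submodule.mem_top
  | add x _ y _ hx hy => exact add_mem (hx d) (hy d)

theorem coeff_mem_of_mem_polySubmodule {p : PolynomialModule A₀ E₀} (hp : p ∈ 𝔉) (d : ℕ) :
    p.coeff d ∈ F₀ := by
  induction hp using Submodule.span_induction generalizing d with
  | mem x hx =>
    obtain ⟨e, he, rfl⟩ := hx
    rw [PolynomialModule.coeff_single, Finsupp.single_apply]
    split
    exacts [he, F₀.zero_mem]
  | zero => exact F₀.zero_mem
  | add x _ y _ hx hy => exact add_mem (hx d) (hy d)
  | smul q x _ hx =>
    rw [PolynomialModule.smul_apply]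
    exact Submodule.sum_mem _ fun ij _ => F₀.smul_mem _ (hx ij.2)

theorem coeff_zero_mem_of_mem_pow_smul_inf {s c : ℕ} {p : PolynomialModule A₀ E₀}
    (hp : p ∈ 𝔪 ^ s • (𝔪 ^ c • ⊤ₓ ⊓ 𝔉)) :
    p.coeff 0 ∈ m₀ ^ s • ((m₀ ^ c • ⊤ : Submodule A₀ E₀) ⊓ F₀) := by
  induction hp using Submodule.smul_induction_on' with
  | smul q hq x hx =>
    rw [PolynomialModule.smul_apply, Finset.Nat.antidiagonal_zero, Finset.sum_singleton]
    refine Submodule.smul_mem_smul ?_ ⟨?_, coeff_mem_of_mem_polySubmodule F₀ hx.2 0⟩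
    · simpa using coeff_mem_of_mem_polyIdeal_pow m₀ hq 0
    · simpa using coeff_mem_of_mem_pow_smul_top m₀ hx.1 0
  | add x _ y _ hx hy => exact add_mem hx hy

theorem single_zero_mem_polySubmodule {e : E₀} (he : e ∈ F₀) :
    PolynomialModule.single A₀ 0 e ∈ 𝔉 :=
  Submodule.subset_span ⟨e, he, rfl⟩

theorem single_zero_mem_pow_smul_top {k : ℕ} {e : E₀}
    (he : e ∈ (m₀ ^ k • ⊤ : Submodule A₀ E₀)) :
    PolynomialModule.single A₀ 0 e ∈ 𝔪 ^ k • ⊤ₓ := by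
  induction he using Submodule.smul_induction_on' with
  | smul a ha x _ =>
    rw [PolynomialModule.single_zero_smul]
    exact Submodule.smul_mem_smul (C_mem_polyIdeal_pow m₀ ha) Submodule.mem_top
  | add x _ y _ hx hy => exact PolynomialModule.single_add (R := A₀) 0 x y ▸ add_mem hx hy

theorem single_zero_mem_pow_smul_inf {s c : ℕ} {e : E₀}
    (he : e ∈ m₀ ^ s • ((m₀ ^ c • ⊤ : Submodule A₀ E₀) ⊓ F₀)) :
    PolynomialModule.single A₀ 0 e ∈ 𝔪 ^ s • (𝔪 ^ c • ⊤ₓ ⊓ 𝔉) := by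
  induction he using Submodule.smul_induction_on' with
  | smul a ha x hx =>
    rw [PolynomialModule.single_zero_smul]
    exact Submodule.smul_mem_smul (C_mem_polyIdeal_pow m₀ ha)
      ⟨single_zero_mem_pow_smul_top m₀ hx.1, single_zero_mem_polySubmodule F₀ hx.2⟩
  | add x _ y _ hx hy => exact PolynomialModule.single_add (R := A₀) 0 x y ▸ add_mem hx hy

theorem single_mem_pow_smul_inf {c n : ℕ} (hc : IsArtinReesBound m₀ F₀ c) (hn : c < n)
    (d : ℕ) {e : E₀} (he : e ∈ (m₀ ^ (n - d) • ⊤ : Submodule A₀ E₀) ⊓ F₀) :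
    PolynomialModule.single A₀ d e ∈ 𝔪 ^ (n - c) • (𝔪 ^ c • ⊤ₓ ⊓ 𝔉) := by
  rw [PolynomialModule.single_eq_X_pow_smul]
  rcases le_or_gt (n - c) d with hd | hd
  · rw [show d = (n - c) + (d - (n - c)) by omega, pow_add, mul_smul]
    refine Submodule.smul_mem_smul (Ideal.pow_mem_pow (X_mem_polyIdeal m₀) _) ⟨?_, ?_⟩
    · have h := X_pow_smul_mem_pow_smul m₀ (single_zero_mem_pow_smul_top m₀ he.1) (d - (n - c))
      exact Submodule.smul_mono_left (Ideal.pow_le_pow_right (by omega)) h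
    · exact Submodule.smul_mem _ _ (single_zero_mem_polySubmodule F₀ he.2)
  · rw [hc (n - d) (by omega)] at he
    have h := X_pow_smul_mem_pow_smul m₀ (single_zero_mem_pow_smul_inf m₀ F₀ he) d
    rwa [show d + (n - d - c) = n - c by omega] at h

theorem isArtinReesBound_polyIdeal_iff (c : ℕ) :
    IsArtinReesBound 𝔪 𝔉 c ↔ IsArtinReesBound m₀ F₀ c := by
  rw [isArtinReesBound_iff, isArtinReesBound_iff]
  refine ⟨fun h n hn e he => ?_, fun h n hn p hp => ?_⟩
  · have hsingle := h n hn
      ⟨single_zero_mem_pow_smul_top m₀ he.1, single_zero_mem_polySubmodule F₀ he.2⟩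
    simpa using coeff_zero_mem_of_mem_pow_smul_inf m₀ F₀ hsingle
  · rw [PolynomialModule.eq_sum_single p]
    refine Submodule.sum_mem _ fun d _ =>
      single_mem_pow_smul_inf m₀ F₀ ((isArtinReesBound_iff m₀ F₀ c).mpr h) hn d ?_
    exact ⟨coeff_mem_of_mem_pow_smul_top m₀ hp.1 d, coeff_mem_of_mem_polySubmodule F₀ hp.2 d⟩

end ArtinRees

theorem arIndex_polynomial_extension_general
    (A₀ : Type*) [CommRing A₀] (m₀ : Ideal A₀)
    (E₀ : Type*) [AddCommGroup E₀] [Module A₀ E₀]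
    (F₀ : Submodule A₀ E₀) :
    arIndex
      (m₀.map (Polynomial.C : A₀ →+* A₀[X]) ⊔ Ideal.span {(Polynomial.X : A₀[X])})
      (Submodule.span A₀[X]
        ((PolynomialModule.single A₀ 0 : E₀ → PolynomialModule A₀ E₀) '' F₀))
    = arIndex m₀ F₀ := by
  simp only [arIndex_eq_sInf]
  exact congrArg sInf (Set.ext (ArtinRees.isArtinReesBound_polyIdeal_iff m₀ F₀))

/-- Let `A₀` be Noetherian, `m₀ ⊆ A₀` an ideal, `E₀` a finitely generated
`A₀`-module and `F₀ ⊆ E₀` a submodule.  With `A = A₀[z]`, `m = m₀A + (z)`, `E = E₀[z]` and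
`F = F₀[z]`, the Artin–Rees index of `F ⊆ E` with respect to `m` equals the Artin–Rees
index of `F₀ ⊆ E₀` with respect to `m₀`. -/
theorem arIndex_polynomial_extension
    (A₀ : Type*) [CommRing A₀] [IsNoetherianRing A₀] (m₀ : Ideal A₀)
    (E₀ : Type*) [AddCommGroup E₀] [Module A₀ E₀] [Module.Finite A₀ E₀]
    (F₀ : Submodule A₀ E₀) :
    arIndex
      (m₀.map (Polynomial.C : A₀ →+* A₀[X]) ⊔ Ideal.span {(Polynomial.X : A₀[X])})
      (Submodule.span A₀[X]
        ((PolynomialModule.single A₀ 0 : E₀ → PolynomialModule A₀ E₀) '' F₀))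
    = arIndex m₀ F₀ :=
  arIndex_polynomial_extension_general A₀ m₀ E₀ F₀
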